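/- If α ≥ 0, then P_α = Q_{√α} · Q_{−√α}, where P_α(X) = X⁶ + 2X⁵ − (α+3)X⁴ − 2(α+3)X³ + (2−α)X² + 4X + 1 and Q_β(X) = X³ + (1−β)X² − (2+β)X − 1; consequently all six roots of P_α are real. -/
import Mathlib


def Ppoly (α X : ℝ) : ℝ :=
  X ^ 6 + 2 * X ^ 5 - (α + 3) * X ^ 4 - 2 * (α + 3) * X ^ 3 + (2 - α) * X ^ 2 + 4 * X + 1

def Qpoly (β X : ℝ) : ℝ := X ^ 3 + (1 - β) * X ^ 2 - (2 + β) * X - 1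

/-- Any complex root of the cubic `X^3 + (1-β)X^2 - (2+β)X - 1` (β real) is real. -/
lemma cubic_real_root (β : ℝ) (z : ℂ)
    (h : z ^ 3 + (1 - (β : ℂ)) * z ^ 2 - (2 + (β : ℂ)) * z - 1 = 0) : z.im = 0 := by
  set x := z.re with hx
  set y := z.im with hy
  have hz : (x : ℂ) + (y : ℂ) * Complex.I = z := Complex.re_add_im z
  have h' : ((x ^ 3 - 3 * x * y ^ 2 + (1 - β) * (x ^ 2 - y ^ 2) - (2 + β) * x - 1 : ℝ) : ℂ)
      + ((3 * x ^ 2 * y - y ^ 3 + 2 * (1 - β) * x * y - (2 + β) * y : ℝ) : ℂ) * Complex.I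
      = 0 := by
    rw [← hz] at h
    push_cast
    linear_combination h - (Complex.I_sq + 1) *
      ((x:ℂ) * (y:ℂ)^2 * 3 + (y:ℂ)^3 * Complex.I + (1 - (β:ℂ)) * (y:ℂ)^2)
  rw [Complex.ext_iff] at h'
  simp only [Complex.add_re, Complex.add_im, Complex.ofReal_re, Complex.ofReal_im,
    Complex.mul_re, Complex.mul_im, Complex.I_re, Complex.I_im, Complex.zero_re,
    Complex.zero_im] at h'
  obtain ⟨h1, h2⟩ := h'
  -- h1 : real part = 0, h2 : imaginary part = 0
  by_contra hy0
  have h2' : 3 * x ^ 2 - y ^ 2 + 2 * (1 - β) * x - (2 + β) = 0 := by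
    have hA : y * (3 * x ^ 2 - y ^ 2 + 2 * (1 - β) * x - (2 + β)) = 0 := by
      linear_combination h2
    exact (mul_eq_zero.mp hA).resolve_left hy0
  set u : ℝ := y ^ 2 with hu
  have hupos : 0 < u := by positivity
  have h1' : x ^ 3 - 3 * x * u + (1 - β) * (x ^ 2 - u) - (2 + β) * x - 1 = 0 := by
    linear_combination h1
  set n : ℝ := x ^ 2 + u with hn
  set r : ℝ := β - 1 - 2 * x with hr
  have e3 : n * r = 1 := by
    simp only [hn, hr]
    linear_combination h1' - x * h2'
  have hnpos : 0 < n := by positivity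
  have hrpos : 0 < r := by
    rcases lt_trichotomy r 0 with h | h | h
    · nlinarith
    · simp [h] at e3
    · exact h
  have hxr : 2 * x * r * (r + 1) = -(r ^ 2 + 3 * r + 1) := by
    simp only [hn, hr] at e3 h2' ⊢
    linear_combination -e3 - (β - 1 - 2 * x) * h2'
  have h5 : 4 * x ^ 2 * r ^ 2 * (r + 1) ^ 2 = (r ^ 2 + 3 * r + 1) ^ 2 := by
    linear_combination (2 * x * r * (r + 1) - (r ^ 2 + 3 * r + 1)) * hxr
  have hrx : r * x ^ 2 < 1 := by nlinarith
  have h4 : 0 < 4 * r * (r + 1) ^ 2 * (1 - r * x ^ 2) :=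
    mul_pos (mul_pos (by linarith : (0:ℝ) < 4 * r) (pow_pos (by linarith) 2)) (by linarith)
  nlinarith [h4, h5, sq_nonneg (r ^ 2 + r + 1)]

theorem stmt5 (α : ℝ) (hα : 0 ≤ α) :
    (∀ X : ℝ, Ppoly α X = Qpoly (Real.sqrt α) X * Qpoly (-Real.sqrt α) X) ∧
    (∀ z : ℂ, z ^ 6 + 2 * z ^ 5 - ((α : ℂ) + 3) * z ^ 4 - 2 * ((α : ℂ) + 3) * z ^ 3 +
        (2 - (α : ℂ)) * z ^ 2 + 4 * z + 1 = 0 → ∃ r : ℝ, z = (r : ℂ)) := by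
  have hs : Real.sqrt α ^ 2 = α := Real.sq_sqrt hα
  constructor
  · intro X
    simp only [Ppoly, Qpoly]
    linear_combination (X ^ 4 + 2 * X ^ 3 + X ^ 2) * hs
  · intro z hz
    have hsc : ((Real.sqrt α : ℝ) : ℂ) ^ 2 = (α : ℂ) := by
      norm_cast
    set b : ℂ := ((Real.sqrt α : ℝ) : ℂ) with hb
    have hfac : (z ^ 3 + (1 - b) * z ^ 2 - (2 + b) * z - 1) *
        (z ^ 3 + (1 - (-b)) * z ^ 2 - (2 + (-b)) * z - 1) = 0 := by
      rw [← hz]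
      linear_combination (-(z ^ 4 + 2 * z ^ 3 + z ^ 2)) * hsc
    rcases mul_eq_zero.mp hfac with hq | hq
    · have := cubic_real_root (Real.sqrt α) z (by push_cast; linear_combination hq)
      exact ⟨z.re, by apply Complex.ext <;> simp [this]⟩
    · have := cubic_real_root (-Real.sqrt α) z (by push_cast; linear_combination hq)
      exact ⟨z.re, by apply Complex.ext <;> simp [this]⟩
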